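/- The MDP of Example 5.1 with initial state 1 is absorbing but not uniformly absorbing: sup_π E_1^π[T₀] = 4 < ∞, yet for every n ≥ 0, sup_π E_1^π[Σ_{t=n}^∞ 𝟙{X_t ≠ 0}] ≥ 2. -/

import Mathlib

/-- Transition kernel of the MDP of Example 5.1 on state space `ℕ` with actions `{1,2}`:
`0` is absorbing; action `1`: `p(0|x,1) = 2^{-x}`, `p(x|x,1) = 1 - 2^{-x}`;
action `2`: `p(0|x,2) = 1/2`, `p(x+1|x,2) = 1/2`. -/
noncomputable def Pkernel (a x y : ℕ) : ℝ :=
  if x = 0 then (if y = 0 then 1 else 0)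
  else if a = 1 then
    (if y = 0 then (1/2 : ℝ)^x else if y = x then 1 - (1/2 : ℝ)^x else 0)
  else (if y = 0 then (1/2 : ℝ) else if y = x + 1 then (1/2 : ℝ) else 0)

/-- A history is a list of (action, resulting state) pairs, most recent first.
`curState x₀ h` is the current state after history `h` starting from `x₀`. -/
def curState (x₀ : ℕ) : List (ℕ × ℕ) → ℕ
  | [] => x₀
  | (_, y) :: _ => y

/-- A (randomized, history-dependent) strategy assigns to the initial state and a history
a probability distribution over actions; `σ x₀ h a` is the probability of action `a`. -/
def IsStrategy (σ : ℕ → List (ℕ × ℕ) → ℕ → ℝ) : Prop :=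
  ∀ x₀ h, (∀ a, 0 ≤ σ x₀ h a) ∧ σ x₀ h 1 + σ x₀ h 2 = 1
    ∧ ∀ a, a ≠ 1 → a ≠ 2 → σ x₀ h a = 0

/-- Probability that the controlled process under `σ` started at `x₀` realizes the
trajectory recorded by the history `h` (most recent pair first). -/
noncomputable def trajProb (σ : ℕ → List (ℕ × ℕ) → ℕ → ℝ) (x₀ : ℕ) :
    List (ℕ × ℕ) → ℝ
  | [] => 1
  | (a, y) :: h => trajProb σ x₀ h * σ x₀ h a * Pkernel a (curState x₀ h) y

/-- `Pne σ x₀ t`: probability that under strategy `σ` started at `x₀` the state at time `t`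
is nonzero, i.e. `P^σ_{x₀}(X_t ≠ 0) = P^σ_{x₀}(T₀ > t)`. -/
noncomputable def Pne (σ : ℕ → List (ℕ × ℕ) → ℕ → ℝ) (x₀ t : ℕ) : ℝ :=
  ∑' h : {h : List (ℕ × ℕ) // h.length = t ∧ curState x₀ h ≠ 0}, trajProb σ x₀ h.1

/-- Expected hitting time of `0`: `E^σ_{x₀}[T₀] = ∑_{t=0}^∞ P^σ_{x₀}(T₀ > t)`. -/
noncomputable def hittingE (σ : ℕ → List (ℕ × ℕ) → ℕ → ℝ) (x₀ : ℕ) : ℝ :=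
  ∑' t : ℕ, Pne σ x₀ t

/-!
The function `w x = 2 ^ x + 2` (and `w 0 = 0`) satisfies `E[w(X_{t+1}) | past] + 1 ≤ w(X_t)`
off `0` under either action, so telescoping bounds the expected time any strategy spends
outside `0` from `x₀`, and a fortiori every tail of it, by `w x₀`; from `1` this is `4`.

Conversely the strategy `φⁿ` climbs from `1` to `n + 1` with probability `2⁻ⁿ` and then keeps
action `1`, leaving `n + 1` only at rate `2⁻⁽ⁿ⁺¹⁾`. Its tail after time `n` is therefore exactly
`2⁻ⁿ · 2ⁿ⁺¹ = 2`, and `E_1^{φⁿ}[T₀] = 4 - 2¹⁻ⁿ` tends to `4`.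
-/

open scoped ENNReal

lemma Pkernel_nonneg (a x y : ℕ) : 0 ≤ Pkernel a x y := by
  have : ((1 : ℝ) / 2) ^ x ≤ 1 := pow_le_one₀ (by norm_num) (by norm_num)
  unfold Pkernel
  split_ifs <;> positivity

lemma Pkernel_zero_left (a y : ℕ) : Pkernel a 0 y = if y = 0 then 1 else 0 := by
  simp [Pkernel]

lemma Pkernel_eq_zero_of_ne (a : ℕ) {x y : ℕ} (hy : y ≠ 0) (hxy : y ≠ if a = 1 then x else x + 1) :
    Pkernel a x y = 0 := by
  unfold Pkernel
  split_ifs at hxy ⊢ <;> simp_all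

section

variable {σ : ℕ → List (ℕ × ℕ) → ℕ → ℝ}

lemma trajProb_nonneg (hσ : IsStrategy σ) (x₀ : ℕ) (h : List (ℕ × ℕ)) : 0 ≤ trajProb σ x₀ h := by
  induction h with
  | nil => exact zero_le_one
  | cons p h ih => exact mul_nonneg (mul_nonneg ih ((hσ x₀ h).1 _)) (Pkernel_nonneg _ _ _)

lemma IsStrategy.tsum_ofReal_eq_one (hσ : IsStrategy σ) (x₀ : ℕ) (h : List (ℕ × ℕ)) :
    ∑' a, ENNReal.ofReal (σ x₀ h a) = 1 := by
  obtain ⟨hnonneg, hsum, hzero⟩ := hσ x₀ h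
  rw [tsum_eq_sum (s := {1, 2}) fun a ha => by simp_all, Finset.sum_pair (by norm_num),
    ← ENNReal.ofReal_add (hnonneg 1) (hnonneg 2), hsum, ENNReal.ofReal_one]

def lengthSuccEquiv (t : ℕ) :
    {h : List (ℕ × ℕ) // h.length = t} × (ℕ × ℕ) ≃ {h : List (ℕ × ℕ) // h.length = t + 1} where
  toFun q := ⟨q.2 :: q.1.1, by simp [q.1.2]⟩
  invFun h := (⟨h.1.tail, by simp [h.2]⟩, h.1.headI)
  left_inv := by rintro ⟨⟨l, hl⟩, p⟩; rfl
  right_inv := by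
    rintro ⟨_ | ⟨p, l⟩, hl⟩
    · simp at hl
    · rfl

variable (σ) in
/-- `expectState σ x₀ t f` is `E^σ_{x₀}[f(X_t)]`, valued in `ℝ≥0∞` so that no summability
has to be tracked. -/
noncomputable def expectState (x₀ t : ℕ) (f : ℕ → ℝ≥0∞) : ℝ≥0∞ :=
  ∑' h : {h : List (ℕ × ℕ) // h.length = t}, ENNReal.ofReal (trajProb σ x₀ h) * f (curState x₀ h)

lemma expectState_zero (x₀ : ℕ) (f : ℕ → ℝ≥0∞) : expectState σ x₀ 0 f = f x₀ := by
  rw [expectState, tsum_eq_single ⟨[], rfl⟩]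
  · simp [trajProb, curState]
  · rintro ⟨l, hl⟩ hne
    exact absurd (Subtype.ext (List.length_eq_zero_iff.mp hl)) hne

lemma expectState_succ (hσ : IsStrategy σ) (x₀ t : ℕ) (f : ℕ → ℝ≥0∞) :
    expectState σ x₀ (t + 1) f = ∑' h : {h : List (ℕ × ℕ) // h.length = t},
      ENNReal.ofReal (trajProb σ x₀ h) * ∑' a, ENNReal.ofReal (σ x₀ h a) *
        ∑' y, ENNReal.ofReal (Pkernel a (curState x₀ h) y) * f y := by
  rw [expectState, ← (lengthSuccEquiv t).tsum_eq, ENNReal.tsum_prod']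
  refine tsum_congr fun h => ?_
  simp_rw [← ENNReal.tsum_mul_left, ENNReal.tsum_prod']
  refine tsum_congr fun a => tsum_congr fun y => ?_
  have hp := trajProb_nonneg hσ x₀ h
  simp only [lengthSuccEquiv, Equiv.coe_fn_mk, trajProb, curState]
  rw [ENNReal.ofReal_mul (mul_nonneg hp ((hσ x₀ h).1 a)), ENNReal.ofReal_mul hp]
  ring

variable (σ) in
noncomputable def survivalProb (x₀ t : ℕ) : ℝ≥0∞ :=
  expectState σ x₀ t fun x => if x = 0 then 0 else 1

/-- Foster's drift condition towards the absorbing state `0`, for every action. -/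
def IsLyapunovFunction (w : ℕ → ℝ≥0∞) : Prop :=
  ∀ a x, x ≠ 0 → ∑' y, ENNReal.ofReal (Pkernel a x y) * w y + 1 ≤ w x

lemma IsLyapunovFunction.drift {w : ℕ → ℝ≥0∞} (hw : IsLyapunovFunction w) (a x : ℕ) :
    ∑' y, ENNReal.ofReal (Pkernel a x y) * w y + (if x = 0 then 0 else 1) ≤ w x := by
  rcases eq_or_ne x 0 with rfl | hx
  · rw [tsum_eq_single 0 fun y hy => by simp [Pkernel_zero_left, hy]]
    simp [Pkernel_zero_left]
  · simpa [hx] using hw a x hx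

lemma IsLyapunovFunction.expectState_succ_add_survivalProb_le {w : ℕ → ℝ≥0∞}
    (hw : IsLyapunovFunction w) (hσ : IsStrategy σ) (x₀ t : ℕ) :
    expectState σ x₀ (t + 1) w + survivalProb σ x₀ t ≤ expectState σ x₀ t w := by
  rw [expectState_succ hσ, survivalProb, expectState, expectState, ← ENNReal.tsum_add]
  refine ENNReal.tsum_le_tsum fun h => ?_
  set x := curState x₀ h
  rw [← mul_add]
  gcongr
  calc ∑' a, ENNReal.ofReal (σ x₀ h a) * ∑' y, ENNReal.ofReal (Pkernel a x y) * w y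
        + (if x = 0 then 0 else 1)
      = ∑' a, ENNReal.ofReal (σ x₀ h a) *
          (∑' y, ENNReal.ofReal (Pkernel a x y) * w y + (if x = 0 then 0 else 1)) := by
        simp_rw [mul_add]
        rw [ENNReal.tsum_add, ENNReal.tsum_mul_right, hσ.tsum_ofReal_eq_one, one_mul]
    _ ≤ ∑' a, ENNReal.ofReal (σ x₀ h a) * w x := by gcongr with a; exact hw.drift a x
    _ = w x := by rw [ENNReal.tsum_mul_right, hσ.tsum_ofReal_eq_one, one_mul]

lemma IsLyapunovFunction.tsum_survivalProb_le {w : ℕ → ℝ≥0∞} (hw : IsLyapunovFunction w)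
    (hσ : IsStrategy σ) (x₀ : ℕ) : ∑' t, survivalProb σ x₀ t ≤ w x₀ := by
  have partial_add_le (T : ℕ) :
      ∑ t ∈ Finset.range T, survivalProb σ x₀ t + expectState σ x₀ T w ≤ w x₀ := by
    induction T with
    | zero => simp [expectState_zero]
    | succ T ih =>
      calc _ = ∑ t ∈ Finset.range T, survivalProb σ x₀ t
            + (expectState σ x₀ (T + 1) w + survivalProb σ x₀ T) := by
            rw [Finset.sum_range_succ]; ring
        _ ≤ w x₀ := le_trans (by gcongr; exact hw.expectState_succ_add_survivalProb_le hσ x₀ T) ih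
  rw [ENNReal.tsum_eq_iSup_nat]
  exact iSup_le fun T => le_trans le_self_add (partial_add_le T)

/-- `w x = 2 ^ x + 2` off `0`: action `1` lowers it by `1 + 2 ^ (1 - x)`, action `2` by `1`. -/
noncomputable def lyapunov (x : ℕ) : ℝ := if x = 0 then 0 else 2 ^ x + 2

lemma lyapunov_nonneg (x : ℕ) : 0 ≤ lyapunov x := by
  unfold lyapunov; split_ifs <;> positivity

lemma isLyapunovFunction_lyapunov : IsLyapunovFunction fun x => ENNReal.ofReal (lyapunov x) := by
  intro a x hx
  set y₀ := if a = 1 then x else x + 1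
  rw [tsum_eq_single y₀ fun y hy => by
    rcases eq_or_ne y 0 with rfl | hy0
    · simp [lyapunov]
    · simp [Pkernel_eq_zero_of_ne a hy0 hy]]
  rw [← ENNReal.ofReal_mul (Pkernel_nonneg _ _ _), ← ENNReal.ofReal_one,
    ← ENNReal.ofReal_add (mul_nonneg (Pkernel_nonneg _ _ _) (lyapunov_nonneg _)) zero_le_one]
  refine ENNReal.ofReal_le_ofReal ?_
  by_cases ha : a = 1
  · have hpow : (1 / 2 : ℝ) ^ x * 2 ^ x = 1 := by rw [← mul_pow]; norm_num
    simp only [y₀, ha, Pkernel, lyapunov, hx, if_true, if_false]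
    nlinarith [pow_pos (by norm_num : (0 : ℝ) < 1 / 2) x]
  · simp [y₀, ha, Pkernel, lyapunov, hx, pow_succ]
    linarith

lemma Pne_eq_toReal_survivalProb (hσ : IsStrategy σ) (x₀ t : ℕ) :
    Pne σ x₀ t = (survivalProb σ x₀ t).toReal := by
  have hsub : survivalProb σ x₀ t =
      ∑' h : {h : List (ℕ × ℕ) // h.length = t ∧ curState x₀ h ≠ 0},
        ENNReal.ofReal (trajProb σ x₀ h) := by
    rw [survivalProb, expectState, ← (Equiv.subtypeSubtypeEquivSubtypeInter _ _).tsum_eq]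
    refine .trans (tsum_congr fun h => ?_) (tsum_subtype {h : {h : List (ℕ × ℕ) // h.length = t} |
      curState x₀ h ≠ 0} fun h => ENNReal.ofReal (trajProb σ x₀ h)).symm
    by_cases hc : curState x₀ h = 0 <;> simp [hc]
  rw [hsub, ENNReal.tsum_toReal_eq fun _ => ENNReal.ofReal_ne_top, Pne]
  exact tsum_congr fun h => (ENNReal.toReal_ofReal (trajProb_nonneg hσ x₀ h)).symm

lemma tsum_Pne_add_le (hσ : IsStrategy σ) (x₀ n : ℕ) :
    ∑' t, Pne σ x₀ (n + t) ≤ lyapunov x₀ := by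
  have hbound := isLyapunovFunction_lyapunov.tsum_survivalProb_le hσ x₀
  have hfinite (t : ℕ) : survivalProb σ x₀ t ≠ ⊤ :=
    ne_top_of_le_ne_top ENNReal.ofReal_ne_top ((ENNReal.le_tsum t).trans hbound)
  simp_rw [Pne_eq_toReal_survivalProb hσ, ← ENNReal.tsum_toReal_eq fun t => hfinite (n + t)]
  refine ENNReal.toReal_le_of_le_ofReal (lyapunov_nonneg x₀) ?_
  exact (ENNReal.tsum_comp_le_tsum_of_injective (add_right_injective n) _).trans hbound

end

/-- The strategy `φⁿ` plays action `2` for the first `n` steps and action `1` afterwards. -/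
def switchAction (n t : ℕ) : ℕ := if t < n then 2 else 1

def switchStrategy (n : ℕ) : ℕ → List (ℕ × ℕ) → ℕ → ℝ :=
  fun _ h a => if a = switchAction n h.length then 1 else 0

lemma isStrategy_switchStrategy (n : ℕ) : IsStrategy (switchStrategy n) := by
  intro _ h
  unfold switchStrategy switchAction
  refine ⟨fun a => by positivity, ?_, fun a h1 h2 => ?_⟩ <;> split_ifs <;> simp_all

/-- The only history of `φⁿ` from `1` that avoids `0` climbs to `n + 1` and stays there. -/
def switchPath (n : ℕ) : ℕ → List (ℕ × ℕ)
  | 0 => []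
  | t + 1 => (switchAction n t, min (t + 1) n + 1) :: switchPath n t

lemma switchPath_length (n t : ℕ) : (switchPath n t).length = t := by
  induction t with
  | zero => rfl
  | succ t ih => simp [switchPath, ih]

lemma curState_switchPath (n t : ℕ) : curState 1 (switchPath n t) = min t n + 1 := by
  cases t <;> simp [switchPath, curState]

lemma eq_switchPath_length {n : ℕ} {h : List (ℕ × ℕ)} (hc : curState 1 h ≠ 0)
    (hp : trajProb (switchStrategy n) 1 h ≠ 0) : h = switchPath n h.length := by
  induction h with
  | nil => rfl
  | cons p h ih =>
    obtain ⟨a, y⟩ := p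
    simp only [trajProb, mul_ne_zero_iff] at hp
    obtain ⟨⟨hp, hσ⟩, hP⟩ := hp
    have hy0 : y ≠ 0 := hc
    have hc' : curState 1 h ≠ 0 := fun h0 => hP (by simp [h0, Pkernel_zero_left, hy0])
    have hh := ih hc' hp
    have ha : a = switchAction n h.length := by by_contra ha; simp [switchStrategy, ha] at hσ
    have hy : y = if a = 1 then curState 1 h else curState 1 h + 1 :=
      not_not.1 fun hne => hP (Pkernel_eq_zero_of_ne a hy0 hne)
    rw [hh, curState_switchPath] at hy
    rw [List.length_cons, switchPath, ← hh, hy, ha]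
    unfold switchAction
    split_ifs <;> simp <;> omega

lemma trajProb_switchPath (n t : ℕ) : trajProb (switchStrategy n) 1 (switchPath n t) =
    (1 / 2 : ℝ) ^ min t n * (1 - (1 / 2 : ℝ) ^ (n + 1)) ^ (t - n) := by
  induction t with
  | zero => simp [switchPath, trajProb]
  | succ t ih =>
    rw [switchPath, trajProb, ih, curState_switchPath]
    simp only [switchStrategy, switchPath_length, if_true, mul_one]
    unfold switchAction
    by_cases htn : t < n
    · rw [min_eq_left htn.le, min_eq_left htn, Nat.sub_eq_zero_of_le htn.le,
        Nat.sub_eq_zero_of_le htn]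
      simp [Pkernel, htn, pow_succ]
    · rw [min_eq_right (not_lt.1 htn), min_eq_right (by omega), Nat.sub_add_comm (not_lt.1 htn)]
      simp [Pkernel, htn, pow_succ, mul_assoc]

lemma Pne_switchStrategy (n t : ℕ) : Pne (switchStrategy n) 1 t =
    (1 / 2 : ℝ) ^ min t n * (1 - (1 / 2 : ℝ) ^ (n + 1)) ^ (t - n) := by
  rw [Pne, tsum_eq_single ⟨switchPath n t, switchPath_length n t, by simp [curState_switchPath]⟩]
  · exact trajProb_switchPath n t
  · rintro ⟨h, rfl, hc⟩ hne
    by_contra hp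
    exact hne (Subtype.ext (eq_switchPath_length hc hp))

lemma Pne_switchStrategy_add (n t : ℕ) :
    Pne (switchStrategy n) 1 (n + t) = (1 / 2 : ℝ) ^ n * (1 - (1 / 2 : ℝ) ^ (n + 1)) ^ t := by
  rw [Pne_switchStrategy, min_eq_right (by omega), Nat.add_sub_cancel_left]

lemma hasSum_Pne_switchStrategy_add (n : ℕ) :
    HasSum (fun t => Pne (switchStrategy n) 1 (n + t)) 2 := by
  have hr : (1 / 2 : ℝ) ^ (n + 1) ≤ 1 := pow_le_one₀ (by norm_num) (by norm_num)
  have hr0 : (0 : ℝ) < (1 / 2) ^ (n + 1) := by positivity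
  have h := (hasSum_geometric_of_lt_one (r := 1 - (1 / 2 : ℝ) ^ (n + 1)) (by linarith)
    (by linarith)).mul_left ((1 / 2 : ℝ) ^ n)
  rw [sub_sub_cancel, pow_succ, mul_inv, ← mul_assoc, mul_inv_cancel₀ (by positivity)] at h
  simpa [Pne_switchStrategy_add, pow_succ] using h

lemma hittingE_switchStrategy (n : ℕ) :
    hittingE (switchStrategy n) 1 = 4 - 2 * (1 / 2 : ℝ) ^ n := by
  have htail := hasSum_Pne_switchStrategy_add n
  simp_rw [add_comm n] at htail
  rw [hittingE, ← ((summable_nat_add_iff n).1 htail.summable).sum_add_tsum_nat_add n,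
    htail.tsum_eq]
  have hhead : ∀ t ∈ Finset.range n, Pne (switchStrategy n) 1 t = (1 / 2 : ℝ) ^ t := by
    intro t ht
    have ht : t ≤ n := (Finset.mem_range.1 ht).le
    rw [Pne_switchStrategy, min_eq_left ht, Nat.sub_eq_zero_of_le ht, pow_zero, mul_one]
  rw [Finset.sum_congr rfl hhead, geom_sum_eq (by norm_num)]
  ring

/-- The MDP of Example 5.1 with initial state `1` is absorbing but not uniformly absorbing:
`sup_π E_1^π[T₀] = 4 < ∞`, yet for every `n ≥ 0`,
`sup_π E_1^π[∑_{t=n}^∞ 𝟙{X_t ≠ 0}] ≥ 2`. -/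
theorem absorbing_not_uniformly_absorbing :
    (⨆ σ : {σ : ℕ → List (ℕ × ℕ) → ℕ → ℝ // IsStrategy σ}, hittingE σ.1 1) = 4
      ∧ ∀ n : ℕ,
          2 ≤ ⨆ σ : {σ : ℕ → List (ℕ × ℕ) → ℕ → ℝ // IsStrategy σ},
                ∑' t : ℕ, Pne σ.1 1 (n + t) := by
  have tail_le (σ : {σ : ℕ → List (ℕ × ℕ) → ℕ → ℝ // IsStrategy σ}) (n : ℕ) :
      ∑' t, Pne σ.1 1 (n + t) ≤ 4 :=
    (tsum_Pne_add_le σ.2 1 n).trans_eq (by norm_num [lyapunov])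
  have hittingE_le (σ : {σ : ℕ → List (ℕ × ℕ) → ℕ → ℝ // IsStrategy σ}) :
      hittingE σ.1 1 ≤ 4 := by
    simpa [hittingE] using tail_le σ 0
  let φ (n : ℕ) : {σ : ℕ → List (ℕ × ℕ) → ℕ → ℝ // IsStrategy σ} :=
    ⟨switchStrategy n, isStrategy_switchStrategy n⟩
  have : Nonempty {σ : ℕ → List (ℕ × ℕ) → ℕ → ℝ // IsStrategy σ} := ⟨φ 0⟩
  refine ⟨le_antisymm (ciSup_le hittingE_le) ?_, fun n => ?_⟩
  · have hlim : Filter.Tendsto (fun n : ℕ => 4 - 2 * (1 / 2 : ℝ) ^ n) Filter.atTop (nhds 4) := by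
      simpa using ((tendsto_pow_atTop_nhds_zero_of_lt_one (by norm_num : (0 : ℝ) ≤ 1 / 2)
        (by norm_num)).const_mul 2).const_sub 4
    refine le_of_tendsto' hlim fun n => ?_
    rw [← hittingE_switchStrategy n]
    exact le_ciSup ⟨4, Set.forall_mem_range.2 hittingE_le⟩ (φ n)
  · rw [← (hasSum_Pne_switchStrategy_add n).tsum_eq]
    exact le_ciSup ⟨4, Set.forall_mem_range.2 (tail_le · n)⟩ (φ n)
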